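/- Preservation of influences: Let f be a Boolean network of dimension n and ⟨f⟩ its interval-semantics encoding. For all i, j ∈ {1,…,n} with i ≠ j: (j,i) is a positive edge of G(f) if and only if (2j, 2i−1) is a positive edge of G(⟨f⟩), and (j,i) is a negative edge of G(f) if and only if (2j, 2i−1) is a negative edge of G(⟨f⟩). -/

import Mathlib

/-- Asynchronous transition relation of a Boolean network `f`:
`x → y` iff exactly one component `i` differs and `y i = f i x`. -/
def asyncStep {ι : Type} (f : ι → (ι → Bool) → Bool) (x y : ι → Bool) : Prop :=
  ∃ i : ι, x i ≠ y i ∧ (∀ j : ι, j ≠ i → x j = y j) ∧ y i = f i x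

/-- Index of the "write" node `2i-1` (0-indexed: `2i`). -/
def wIdx {n : ℕ} (i : Fin n) : Fin (2 * n) := ⟨2 * i.val, by have := i.isLt; omega⟩

/-- Index of the "read" node `2i` (0-indexed: `2i+1`). -/
def rIdx {n : ℕ} (i : Fin n) : Fin (2 * n) := ⟨2 * i.val + 1, by have := i.isLt; omega⟩

/-- `γ : 𝔹^{2n} → 𝔹^n`, projection on read nodes. -/
def gam {n : ℕ} (z : Fin (2 * n) → Bool) : Fin n → Bool := fun i => z (rIdx i)

/-- `α : 𝔹^n → 𝔹^{2n}`, consistent configuration. -/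
def alph {n : ℕ} (x : Fin n → Bool) : Fin (2 * n) → Bool :=
  fun k => x ⟨k.val / 2, by have := k.isLt; omega⟩

/-- Interval-semantics encoding `⟨f⟩` of a Boolean network `f`. -/
def encode {n : ℕ} (f : Fin n → (Fin n → Bool) → Bool) :
    Fin (2 * n) → (Fin (2 * n) → Bool) → Bool := fun k z =>
  let i : Fin n := ⟨k.val / 2, by have := k.isLt; omega⟩
  if k.val % 2 = 0 then
    (f i (gam z) && (!(z (rIdx i)) || z (wIdx i))) || (!(z (rIdx i)) && z (wIdx i))
  else
    z (wIdx i)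

/-- Positive edge `(j,i)` of the influence graph `G(f)`. -/
def posEdge {ι : Type} (f : ι → (ι → Bool) → Bool) (j i : ι) : Prop :=
  ∃ x y : ι → Bool, (∀ k : ι, k ≠ j → x k = y k) ∧ x j = false ∧ y j = true ∧
    f i x = false ∧ f i y = true

/-- Negative edge `(j,i)` of the influence graph `G(f)`. -/
def negEdge {ι : Type} (f : ι → (ι → Bool) → Bool) (j i : ι) : Prop :=
  ∃ x y : ι → Bool, (∀ k : ι, k ≠ j → x k = y k) ∧ x j = false ∧ y j = true ∧
    f i x = true ∧ f i y = false

/-! In the encoding, the write node `2i-1` of a component that is not in transition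
(`z_{2i-1} = z_{2i}`) evaluates `f_i` on the read nodes, while during a transition it keeps its
value. Since `i ≠ j`, flipping the read node `2j` leaves node `i` settled or in transition; so a
flip of `2j` changing `⟨f⟩_{2i-1}` happens at a settled `i` and is a flip of `j` changing `f_i`,
and conversely a flip of `j` changing `f_i` at `x` lifts to a flip of `2j` at `α(x)`. -/

/-- Sign `true` unfolds to `posEdge`, sign `false` to `negEdge`. -/
def signedEdge {ι : Type} (f : ι → (ι → Bool) → Bool) (j i : ι) (s : Bool) : Prop :=
  ∃ x y : ι → Bool, (∀ k : ι, k ≠ j → x k = y k) ∧ x j = false ∧ y j = true ∧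
    f i x = !s ∧ f i y = s

section Encoding

variable {n : ℕ}

lemma rIdx_injective : Function.Injective (rIdx (n := n)) := by
  intro k l h
  simp only [rIdx, Fin.ext_iff] at h ⊢
  omega

lemma wIdx_ne_rIdx (i j : Fin n) : wIdx i ≠ rIdx j := by
  simp only [wIdx, rIdx, ne_eq, Fin.ext_iff]
  omega

lemma alph_rIdx (x : Fin n → Bool) (k : Fin n) : alph x (rIdx k) = x k :=
  congrArg x (Fin.ext (by simp only [rIdx]; omega))

lemma alph_wIdx (x : Fin n → Bool) (k : Fin n) : alph x (wIdx k) = x k :=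
  congrArg x (Fin.ext (by simp only [wIdx]; omega))

lemma gam_alph (x : Fin n → Bool) : gam (alph x) = x :=
  funext (alph_rIdx x)

lemma gam_update_rIdx (z : Fin (2 * n) → Bool) (j : Fin n) (b : Bool) :
    gam (Function.update z (rIdx j) b) = Function.update (gam z) j b :=
  Function.update_comp_eq_of_injective z rIdx_injective j b

lemma encode_wIdx (f : Fin n → (Fin n → Bool) → Bool) (i : Fin n) (z : Fin (2 * n) → Bool) :
    encode f (wIdx i) z = if z (rIdx i) = z (wIdx i) then f i (gam z) else z (wIdx i) := by
  have hi : (⟨(wIdx i).val / 2, by have := (wIdx i).isLt; omega⟩ : Fin n) = i :=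
    Fin.ext (by simp only [wIdx]; omega)
  have heven : (wIdx i).val % 2 = 0 := by simp only [wIdx]; omega
  simp only [encode, heven, hi, if_true]
  cases z (rIdx i) <;> cases z (wIdx i) <;> simp

theorem signedEdge_encode_iff (f : Fin n → (Fin n → Bool) → Bool) {i j : Fin n} (hij : i ≠ j)
    (s : Bool) : signedEdge f j i s ↔ signedEdge (encode f) (rIdx j) (wIdx i) s := by
  constructor
  · rintro ⟨x, y, hxy, hx, hy, hfx, hfy⟩
    have hy_eq : y = Function.update x j true :=
      Function.eq_update_iff.2 ⟨hy, fun k hk => (hxy k hk).symm⟩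
    set z' := Function.update (alph x) (rIdx j) true
    have hz'_r : z' (rIdx i) = x i :=
      (Function.update_of_ne (rIdx_injective.ne hij) _ _).trans (alph_rIdx x i)
    have hz'_w : z' (wIdx i) = x i :=
      (Function.update_of_ne (wIdx_ne_rIdx i j) _ _).trans (alph_wIdx x i)
    refine ⟨alph x, z', fun k hk => (Function.update_of_ne hk _ _).symm,
      (alph_rIdx x j).trans hx, Function.update_self _ _ _, ?_, ?_⟩
    · rw [encode_wIdx, alph_rIdx, alph_wIdx, if_pos rfl, gam_alph, hfx]
    · rw [encode_wIdx, hz'_r, hz'_w, if_pos rfl, gam_update_rIdx, gam_alph, ← hy_eq, hfy]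
  · rintro ⟨z, z', hzz', hz, hz', hfz, hfz'⟩
    have hr : z' (rIdx i) = z (rIdx i) := (hzz' _ (rIdx_injective.ne hij)).symm
    have hw : z' (wIdx i) = z (wIdx i) := (hzz' _ (wIdx_ne_rIdx i j)).symm
    rw [encode_wIdx] at hfz
    rw [encode_wIdx, hr, hw] at hfz'
    have hsettled : z (rIdx i) = z (wIdx i) := by
      by_contra h
      rw [if_neg h] at hfz hfz'
      cases s <;> simp_all
    rw [if_pos hsettled] at hfz hfz'
    exact ⟨gam z, gam z', fun k hk => hzz' _ (rIdx_injective.ne hk), hz, hz', hfz, hfz'⟩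

end Encoding

/-- for `i ≠ j`, `(j,i)` is a positive (resp. negative) edge of `G(f)`
iff `(2j, 2i−1)` is a positive (resp. negative) edge of `G(⟨f⟩)`. -/
theorem influence_preserved {n : ℕ} (f : Fin n → (Fin n → Bool) → Bool)
    (i j : Fin n) (hij : i ≠ j) :
    (posEdge f j i ↔ posEdge (encode f) (rIdx j) (wIdx i)) ∧
    (negEdge f j i ↔ negEdge (encode f) (rIdx j) (wIdx i)) :=
  ⟨signedEdge_encode_iff f hij true, signedEdge_encode_iff f hij false⟩
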